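/- Let T = (D, M) be a thermodynamic binding network with monomer matrix M_T, and let c be a monomer collection of T with M_T c >= 0 componentwise. Suppose there exist nonempty (nonzero) monomer collections c_1, c_2 in ℕ^M such that c_1 + c_2 = c, M_T c_1 >= 0 componentwise, and M_T c_2 >= 0 componentwise. Then every stable configuration α of c satisfies S(α) > 1; that is, every stable configuration of c consists of at least two polymers. -/

import Mathlib

/-!
If each part of a partition of the monomers has, for every domain type `x`, no more
instances of `x*` than of `x`, then inside each part every complementary domain can be
bound to a primary domain of the same part. This gives a saturated configuration
with no bond across parts, hence with at least one polymer per nonempty part; a stable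
configuration has at least as many polymers. The split `c = c₁ + c₂` is such a partition
with two nonempty parts.
-/

/-- A monomer type over a set `D` of primary domain types: for each primary
domain type it records the number of instances of that domain and of its
complementary (starred) domain on the monomer. -/
structure Monomer (D : Type) where
  prim : D → ℕ
  star : D → ℕ

/-- Instances of primary domains in the monomer collection `mon : I → Monomer D`
(`I` indexes the individual monomers). -/
def PrimInst {D I : Type} (mon : I → Monomer D) : Type :=
  Σ i : I, Σ x : D, Fin ((mon i).prim x)

/-- Instances of complementary (starred) domains in the collection `mon`. -/
def StarInst {D I : Type} (mon : I → Monomer D) : Type :=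
  Σ i : I, Σ x : D, Fin ((mon i).star x)

/-- A configuration of the monomer collection `mon`: a matching between primary
domain instances and complementary domain instances of the same domain type. -/
structure Config {D I : Type} (mon : I → Monomer D) where
  bond : PrimInst mon → Option (StarInst mon)
  inj : ∀ p q s, bond p = some s → bond q = some s → p = q
  compat : ∀ p s, bond p = some s → p.2.1 = s.2.1

namespace Config

variable {D I : Type} {mon : I → Monomer D}

/-- A configuration is saturated if no primary domain instance of some type and
complementary instance of the same type are both unmatched. -/
def Saturated (α : Config mon) : Prop :=
  ¬ ∃ (p : PrimInst mon) (s : StarInst mon),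
      p.2.1 = s.2.1 ∧ α.bond p = none ∧ ∀ q, α.bond q ≠ some s

/-- The monomer binding graph: vertices are monomers, with an edge between two
(distinct) monomers that share at least one bound pair of domain instances.
Its connected components are the polymers of the configuration. -/
def bindingGraph (α : Config mon) : SimpleGraph I where
  Adj i j := i ≠ j ∧ ∃ p s, α.bond p = some s ∧
      ((p.1 = i ∧ s.1 = j) ∨ (p.1 = j ∧ s.1 = i))
  symm := by
    refine ⟨?_⟩
    rintro i j ⟨hne, p, s, hb, hor⟩
    exact ⟨hne.symm, p, s, hb, hor.symm⟩
  loopless := by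
    refine ⟨?_⟩
    rintro i ⟨hne, -⟩
    exact hne rfl

/-- The entropy `S(α)`: the number of polymers (connected components). -/
noncomputable def entropy (α : Config mon) : ℕ :=
  Nat.card α.bindingGraph.ConnectedComponent

/-- A configuration is stable if it is saturated and has maximal entropy among
all saturated configurations of the same monomer collection. -/
def IsStable (α : Config mon) : Prop :=
  α.Saturated ∧ ∀ β : Config mon, β.Saturated → β.entropy ≤ α.entropy

/-- The size of a polymer (connected component) `C`: the number of monomers in it. -/
noncomputable def polymerSize (α : Config mon) (C : α.bindingGraph.ConnectedComponent) : ℕ :=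
  Nat.card {i : I // α.bindingGraph.connectedComponentMk i = C}

/-- A monomer is free if its polymer contains no other monomer. -/
def Free (α : Config mon) (i : I) : Prop :=
  ∀ j : I, α.bindingGraph.Reachable i j → j = i

end Config

/-- The monomer matrix `M_T` applied to a count vector `c`: component `x` is the
number of instances of domain `x` minus the number of instances of `x*` in the
collection with `c j` copies of monomer type `Mty j`. -/
def matVec {D : Type} {m : ℕ} (Mty : Fin m → Monomer D) (c : Fin m → ℕ) (x : D) : ℤ :=
  ∑ j, (c j : ℤ) * (((Mty j).prim x : ℤ) - ((Mty j).star x : ℤ))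

open Function Finset

def sigmaSigmaEquivPart {I D κ : Type} (part : I → κ) (n : I → D → ℕ) :
    (Σ i, Σ x, Fin (n i x)) ≃ Σ xk : D × κ, Σ i : {i // part i = xk.2}, Fin (n i xk.1) where
  toFun a := ⟨(a.2.1, part a.1), ⟨a.1, rfl⟩, a.2.2⟩
  invFun b := ⟨b.2.1.1, b.1.1, b.2.2⟩
  left_inv _ := rfl
  right_inv := by
    rintro ⟨⟨x, k⟩, ⟨i, h : part i = k⟩, n⟩
    subst h
    rfl

section Partition

variable {D I κ : Type} {mon : I → Monomer D}

theorem exists_embedding_starInst_primInst [Fintype I] [DecidableEq κ] (part : I → κ)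
    (hcount : ∀ x k, ∑ i with part i = k, (mon i).star x ≤ ∑ i with part i = k, (mon i).prim x) :
    ∃ f : StarInst mon ↪ PrimInst mon, ∀ s, (f s).2.1 = s.2.1 ∧ part (f s).1 = part s.1 := by
  have emb : ∀ xk : D × κ, Nonempty ((Σ i : {i // part i = xk.2}, Fin ((mon i).star xk.1)) ↪
      (Σ i : {i // part i = xk.2}, Fin ((mon i).prim xk.1))) := fun xk =>
    Embedding.nonempty_of_card_le <| by
      simpa only [Fintype.card_sigma, Fintype.card_fin,
        sum_subtype _ (fun _ => mem_filter_univ _)] using hcount xk.1 xk.2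
  let eS := sigmaSigmaEquivPart part (fun i x => (mon i).star x)
  let eP := sigmaSigmaEquivPart part (fun i x => (mon i).prim x)
  refine ⟨eS.toEmbedding.trans
    ((Embedding.sigmaMap (Embedding.refl _) fun xk => (emb xk).some).trans
      eP.symm.toEmbedding), fun s => ?_⟩
  exact Prod.mk.inj (congrArg Sigma.fst (eP.apply_symm_apply _))

namespace Config

noncomputable def ofEmbedding (f : StarInst mon ↪ PrimInst mon)
    (hdom : ∀ s, (f s).2.1 = s.2.1) : Config mon where
  bond := partialInv f
  inj p q s hp hq :=
    ((f.injective.isPartialInv s p).1 hp).symm.trans ((f.injective.isPartialInv s q).1 hq)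
  compat p s h := by rw [← (f.injective.isPartialInv s p).1 h, hdom]

theorem ofEmbedding_bond_eq_some {f : StarInst mon ↪ PrimInst mon}
    {hdom : ∀ s, (f s).2.1 = s.2.1} {p : PrimInst mon} {s : StarInst mon} :
    (ofEmbedding f hdom).bond p = some s ↔ f s = p :=
  f.injective.isPartialInv s p

theorem ofEmbedding_saturated (f : StarInst mon ↪ PrimInst mon)
    (hdom : ∀ s, (f s).2.1 = s.2.1) : (ofEmbedding f hdom).Saturated := by
  rintro ⟨-, s, -, -, hfree⟩
  exact hfree (f s) (ofEmbedding_bond_eq_some.2 rfl)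

theorem part_eq_of_reachable {α : Config mon} (part : I → κ)
    (hbond : ∀ p s, α.bond p = some s → part p.1 = part s.1) {i j : I}
    (h : α.bindingGraph.Reachable i j) : part i = part j := by
  obtain ⟨w⟩ := h
  induction w with
  | nil => rfl
  | cons hadj _ ih =>
    obtain ⟨-, p, s, hb, ⟨rfl, rfl⟩ | ⟨rfl, rfl⟩⟩ := hadj
    · exact (hbond p s hb).trans ih
    · exact (hbond p s hb).symm.trans ih

theorem one_lt_entropy_of_part_ne [Finite I] (α : Config mon) (part : I → κ)
    (hbond : ∀ p s, α.bond p = some s → part p.1 = part s.1) {i j : I}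
    (hij : part i ≠ part j) : 1 < α.entropy :=
  Finite.one_lt_card_iff_nontrivial.2
    ⟨_, _, fun h => hij (part_eq_of_reachable part hbond (SimpleGraph.ConnectedComponent.exact h))⟩

theorem IsStable.one_lt_entropy [Fintype I] [DecidableEq κ] {α : Config mon}
    (hα : α.IsStable) (part : I → κ)
    (hcount : ∀ x k, ∑ i with part i = k, (mon i).star x ≤ ∑ i with part i = k, (mon i).prim x)
    {i j : I} (hij : part i ≠ part j) : 1 < α.entropy := by
  obtain ⟨f, hf⟩ := exists_embedding_starInst_primInst part hcount
  let β := ofEmbedding f fun s => (hf s).1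
  have hβ : 1 < β.entropy := by
    refine one_lt_entropy_of_part_ne β part (fun p s hb => ?_) hij
    rw [← ofEmbedding_bond_eq_some.1 hb, (hf s).2]
  exact hβ.trans_le (hα.2 β (ofEmbedding_saturated f _))

end Config

end Partition

section Counting

variable {m : ℕ}

theorem sum_sigma_fin_add_filter_lt (a b g : Fin m → ℕ) :
    ∑ i : Σ j, Fin ((a + b) j) with (i.2 : ℕ) < a i.1, g i.1 = ∑ j, a j * g j := by
  rw [sum_filter, Fintype.sum_sigma]
  refine sum_congr rfl fun j _ => ?_
  rw [← sum_filter]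
  simp only [sum_const, Fin.card_filter_val_lt, Pi.add_apply, le_add_iff_nonneg_right,
    zero_le, min_eq_right, smul_eq_mul]

theorem sum_sigma_fin_add_filter_not_lt (a b g : Fin m → ℕ) :
    ∑ i : Σ j, Fin ((a + b) j) with ¬ (i.2 : ℕ) < a i.1, g i.1 = ∑ j, b j * g j := by
  have htotal := sum_filter_add_sum_filter_not univ
    (fun i : Σ j, Fin ((a + b) j) => (i.2 : ℕ) < a i.1) (fun i => g i.1)
  rw [sum_sigma_fin_add_filter_lt, Fintype.sum_sigma] at htotal
  simp only [sum_const, card_univ, Fintype.card_fin, smul_eq_mul, Pi.add_apply, add_mul,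
    sum_add_distrib] at htotal
  exact Nat.add_left_cancel htotal

theorem sum_star_le_sum_prim_of_matVec_nonneg {D : Type} (Mty : Fin m → Monomer D)
    (c : Fin m → ℕ) {x : D} (h : 0 ≤ matVec Mty c x) :
    ∑ j, c j * (Mty j).star x ≤ ∑ j, c j * (Mty j).prim x := by
  simp only [matVec, mul_sub, sum_sub_distrib, sub_nonneg] at h
  exact_mod_cast h

end Counting

theorem stmt2_general (D : Type) (m : ℕ) (Mty : Fin m → Monomer D)
    (c c₁ c₂ : Fin m → ℕ)
    (h₁ : c₁ ≠ 0) (h₂ : c₂ ≠ 0) (hsum : c₁ + c₂ = c)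
    (hc₁ : ∀ x, 0 ≤ matVec Mty c₁ x) (hc₂ : ∀ x, 0 ≤ matVec Mty c₂ x)
    (α : Config (fun i : (Σ j : Fin m, Fin (c j)) => Mty i.1))
    (hα : α.IsStable) :
    1 < α.entropy := by
  subst hsum
  obtain ⟨j₁, hj₁⟩ := ne_iff.mp h₁
  obtain ⟨j₂, hj₂⟩ := ne_iff.mp h₂
  simp only [Pi.zero_apply] at hj₁ hj₂
  have hlt₁ : 0 < c₁ j₁ + c₂ j₁ := by omega
  have hlt₂ : c₁ j₂ < c₁ j₂ + c₂ j₂ := by omega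
  refine hα.one_lt_entropy (fun i => decide ((i.2 : ℕ) < c₁ i.1)) (fun x k => ?_)
    (i := ⟨j₁, ⟨0, hlt₁⟩⟩) (j := ⟨j₂, ⟨c₁ j₂, hlt₂⟩⟩) ?_
  · cases k
    · simp only [decide_eq_false_iff_not]
      rw [sum_sigma_fin_add_filter_not_lt c₁ c₂ fun j => (Mty j).star x,
        sum_sigma_fin_add_filter_not_lt c₁ c₂ fun j => (Mty j).prim x]
      exact sum_star_le_sum_prim_of_matVec_nonneg Mty c₂ (hc₂ x)
    · simp only [decide_eq_true_eq]
      rw [sum_sigma_fin_add_filter_lt c₁ c₂ fun j => (Mty j).star x,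
        sum_sigma_fin_add_filter_lt c₁ c₂ fun j => (Mty j).prim x]
      exact sum_star_le_sum_prim_of_matVec_nonneg Mty c₁ (hc₁ x)
  · simp [Nat.pos_iff_ne_zero.2 hj₁]

/-- splitting lemma. If a monomer collection `c` with
`M_T c ≥ 0` splits as `c = c₁ + c₂` with `c₁, c₂` nonzero and
`M_T c₁ ≥ 0`, `M_T c₂ ≥ 0` componentwise, then every stable configuration of
`c` has entropy greater than 1, i.e., consists of at least two polymers. -/
theorem stmt2 (D : Type) (m : ℕ) (Mty : Fin m → Monomer D)
    (hne : ∀ j, ∃ x, 0 < (Mty j).prim x + (Mty j).star x)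
    (c c₁ c₂ : Fin m → ℕ)
    (hc : ∀ x, 0 ≤ matVec Mty c x)
    (h₁ : c₁ ≠ 0) (h₂ : c₂ ≠ 0) (hsum : c₁ + c₂ = c)
    (hc₁ : ∀ x, 0 ≤ matVec Mty c₁ x) (hc₂ : ∀ x, 0 ≤ matVec Mty c₂ x)
    (α : Config (fun i : (Σ j : Fin m, Fin (c j)) => Mty i.1))
    (hα : α.IsStable) :
    1 < α.entropy :=
  stmt2_general D m Mty c c₁ c₂ h₁ h₂ hsum hc₁ hc₂ α hα
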